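/- arXiv:2110.13109 — 2 statements merged into one kernel-verified Lean document; each statement's English description precedes it below -/
import Mathlib

section
/- Let H and K be groups with H abelian, let Z be a group with injective homomorphisms ι : Z → H and κ : Z → K whose images are central, and form the central product G = (H × K)/N, where N = {(ι(z), κ(z)⁻¹) : z ∈ Z}, with quotient map π : H × K → G. If (h₁,k₁), …, (hₙ,kₙ) ∈ H × K are such that the images π(h₁,k₁), …, π(hₙ,kₙ) pairwise commute in G, then k₁, …, kₙ pairwise commute in K. Consequently, the preimage under πⁿ : (H × K)ⁿ → Gⁿ of the set of commuting n-tuples of G is exactly Hⁿ × Cₙ(K), where Cₙ(K) is the set of commuting n-tuples of K. -/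
/-!
Two classes `π a`, `π b` commute exactly when `(a * b)⁻¹ * (b * a) ∈ N`. Since `H` is abelian,
this element is `(1, (a.2 * b.2)⁻¹ * (b.2 * a.2))`, and an element `(1, k)` of `N` is
`(ι z, (κ z)⁻¹)` with `ι z = 1`, so `z = 1` by injectivity of `ι` and `k = 1`.
-/

theorem QuotientGroup.commute_mk_iff {G : Type*} [Group G] (N : Subgroup G) [N.Normal]
    (a b : G) : Commute (a : G ⧸ N) b ↔ (a * b)⁻¹ * (b * a) ∈ N := by
  rw [commute_iff_eq, ← QuotientGroup.mk_mul, ← QuotientGroup.mk_mul, QuotientGroup.eq]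

theorem Prod.mul_inv_mul_mul_comm_of_commGroup {H K : Type*} [CommGroup H] [Group K]
    (a b : H × K) : (a * b)⁻¹ * (b * a) = ((1 : H), (a.2 * b.2)⁻¹ * (b.2 * a.2)) :=
  Prod.ext (inv_mul_eq_one.mpr (mul_comm _ _)) rfl

theorem commute_mk_iff_commute_snd {H K : Type*} [CommGroup H] [Group K]
    (N : Subgroup (H × K)) [N.Normal] (hN : ∀ k : K, ((1 : H), k) ∈ N → k = 1)
    (a b : H × K) : Commute (a : (H × K) ⧸ N) b ↔ Commute a.2 b.2 := by
  rw [QuotientGroup.commute_mk_iff, Prod.mul_inv_mul_mul_comm_of_commGroup, commute_iff_eq,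
    ← inv_mul_eq_one]
  exact ⟨hN _, fun h => h ▸ N.one_mem⟩

theorem stmt_3_general {H K Z : Type*} [CommGroup H] [Group K] [Group Z]
    (ι : Z →* H) (κ : Z →* K)
    (hι : Function.Injective ι)
    (N : Subgroup (H × K)) [N.Normal]
    (hN : ∀ p : H × K, p ∈ N ↔ ∃ z : Z, p = (ι z, (κ z)⁻¹))
    (n : ℕ) (g : Fin n → H × K)
    (hg : ∀ i j : Fin n,
      Commute (QuotientGroup.mk (g i) : (H × K) ⧸ N) (QuotientGroup.mk (g j))) :
    (∀ i j : Fin n, Commute (g i).2 (g j).2) ∧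
    (∀ g' : Fin n → H × K,
      (∀ i j : Fin n,
        Commute (QuotientGroup.mk (g' i) : (H × K) ⧸ N) (QuotientGroup.mk (g' j))) ↔
      (∀ i j : Fin n, Commute (g' i).2 (g' j).2)) := by
  have hN₁ : ∀ k : K, ((1 : H), k) ∈ N → k = 1 := by
    intro k hk
    obtain ⟨z, hz⟩ := (hN _).mp hk
    obtain rfl : z = 1 := hι (by simpa using (congrArg Prod.fst hz).symm)
    simpa using congrArg Prod.snd hz
  have key := commute_mk_iff_commute_snd N hN₁
  exact ⟨fun i j => (key _ _).mp (hg i j),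
    fun g' => forall₂_congr fun i j => key (g' i) (g' j)⟩

/-- Let `H` and `K` be groups with `H` abelian, let `Z` be a group with
injective homomorphisms `ι : Z → H` and `κ : Z → K` whose images are central, and form the
central product `G = (H × K)/N` where `N = {(ι z, (κ z)⁻¹) : z ∈ Z}`.  If the images of
`(h₁,k₁), …, (hₙ,kₙ)` in `G` pairwise commute, then `k₁, …, kₙ` pairwise commute in `K`;
consequently the preimage in `(H × K)ⁿ` of the set of commuting `n`-tuples of `G` is exactly
`Hⁿ × Cₙ(K)`. -/
theorem stmt_3 {H K Z : Type*} [CommGroup H] [Group K] [Group Z]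
    (ι : Z →* H) (κ : Z →* K)
    (hι : Function.Injective ι) (hκ : Function.Injective κ)
    (hκc : ∀ z : Z, κ z ∈ Subgroup.center K)
    (N : Subgroup (H × K)) [N.Normal]
    (hN : ∀ p : H × K, p ∈ N ↔ ∃ z : Z, p = (ι z, (κ z)⁻¹))
    (n : ℕ) (g : Fin n → H × K)
    (hg : ∀ i j : Fin n,
      Commute (QuotientGroup.mk (g i) : (H × K) ⧸ N) (QuotientGroup.mk (g j))) :
    (∀ i j : Fin n, Commute (g i).2 (g j).2) ∧
    (∀ g' : Fin n → H × K,
      (∀ i j : Fin n,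
        Commute (QuotientGroup.mk (g' i) : (H × K) ⧸ N) (QuotientGroup.mk (g' j))) ↔
      (∀ i j : Fin n, Commute (g' i).2 (g' j).2)) :=
  stmt_3_general ι κ hι N hN n g hg
end

section
/- Let G be a compact Lie group whose identity component G₀ = T is abelian (hence a torus), so that G is an extension of the finite group Q = G/T by T. Then every element of the identity component [G,G]₀ of the commutator subgroup [G,G] can be written as a finite product [g₁,t₁]·[g₂,t₂]⋯[gₙ,tₙ] with g₁,…,gₙ ∈ G and t₁,…,tₙ ∈ T. -/
/-!
Put `T = G₀` and `K = ⁅G, T⁆`. Since `T` is abelian and normal, `t ↦ ⁅g, t⁆` is a continuous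
endomorphism of `T` depending only on the coset `gT`; as `G` is a manifold, `T` is open, so there
are finitely many cosets and `K` is the product of finitely many compact images of `T`, hence
compact and closed. In `G/K` the image of `T` is central of finite index, so `G/K` has finitely
many commutators and, by Schur's theorem, a finite commutator subgroup. The connected group
`[G,G]₀` maps continuously into this finite subset of the Hausdorff group `G/K`, hence into `1`,
i.e. `[G,G]₀ ≤ K`.
-/

theorem ModelWithCorners.locallyConnectedSpace {E : Type*} [NormedAddCommGroup E]
    [NormedSpace ℝ E] {H : Type*} [TopologicalSpace H] (I : ModelWithCorners ℝ E H) :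
    LocallyConnectedSpace H :=
  haveI := I.convex_range.locallyPathConnectedSpace
  I.isClosedEmbedding.isEmbedding.toHomeomorph.locallyConnectedSpace

namespace Subgroup

open scoped IsMulCommutative commutatorElement

variable {G : Type*} [Group G]

theorem commutatorElement_mul_left_of_mem_center {a z : G} (hz : z ∈ center G) (b : G) :
    ⁅a * z, b⁆ = ⁅a, b⁆ := by
  rw [commutatorElement_mul_left_eq_conj_mul,
    commutatorElement_eq_one_iff_mul_comm.mpr (mem_center_iff.mp hz b).symm, mul_one,
    mul_inv_cancel, one_mul]

theorem commutatorElement_mul_right_of_mem_center (a : G) {b w : G} (hw : w ∈ center G) :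
    ⁅a, b * w⁆ = ⁅a, b⁆ := by
  rw [← commutatorElement_inv, commutatorElement_mul_left_of_mem_center hw, commutatorElement_inv]

theorem finite_commutatorSet_of_finiteIndex_center [(center G).FiniteIndex] :
    Finite (commutatorSet G) := by
  refine Set.Finite.to_subtype ((Set.finite_range fun p : (G ⧸ center G) × (G ⧸ center G) ↦
    ⁅p.1.out, p.2.out⁆).subset ?_)
  rintro _ ⟨a, b, rfl⟩
  obtain ⟨z, hz⟩ := QuotientGroup.mk_out_eq_mul (center G) a
  obtain ⟨w, hw⟩ := QuotientGroup.mk_out_eq_mul (center G) b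
  refine ⟨(a, b), ?_⟩
  simp only [hz, hw, commutatorElement_mul_left_of_mem_center z.2,
    commutatorElement_mul_right_of_mem_center _ w.2]

theorem finite_commutator_quotient_of_commutator_top_le {N K : Subgroup G} [K.Normal]
    [N.FiniteIndex] (h : ⁅(⊤ : Subgroup G), N⁆ ≤ K) :
    Finite (_root_.commutator (G ⧸ K)) := by
  have hcenter : N.map (QuotientGroup.mk' K) ≤ center (G ⧸ K) := by
    rw [← commutator_top_left_eq_bot_iff_le_center,
      ← map_top_of_surjective _ (QuotientGroup.mk'_surjective K), ← map_commutator, eq_bot_iff,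
      map_le_iff_le_comap, MonoidHom.comap_bot, QuotientGroup.ker_mk']
    exact h
  have : (N.map (QuotientGroup.mk' K)).FiniteIndex :=
    ⟨ne_zero_of_dvd_ne_zero FiniteIndex.index_ne_zero
      (index_map_dvd _ (QuotientGroup.mk'_surjective K))⟩
  have := finiteIndex_of_le hcenter
  have := finite_commutatorSet_of_finiteIndex_center (G := G ⧸ K)
  infer_instance

-- `x⁻¹ * y⁻¹ * x * y = ⁅x⁻¹, y⁻¹⁆` in Mathlib's convention `⁅x, y⁆ = x * y * x⁻¹ * y⁻¹`.
theorem exists_prod_of_mem_commutator_top (N : Subgroup G) [N.Normal] {x : G}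
    (hx : x ∈ ⁅(⊤ : Subgroup G), N⁆) :
    ∃ (n : ℕ) (g t : Fin n → G), (∀ i, t i ∈ N) ∧
      x = (List.ofFn fun i ↦ (g i)⁻¹ * (t i)⁻¹ * g i * t i).prod := by
  let f : G × G → G := fun p ↦ p.1⁻¹ * p.2⁻¹ * p.1 * p.2
  suffices ∃ l : List (G × G), (∀ p ∈ l, p.2 ∈ N) ∧ x = (l.map f).prod by
    obtain ⟨l, hl, rfl⟩ := this
    exact ⟨l.length, fun i ↦ l[i].1, fun i ↦ l[i].2, fun i ↦ hl _ (l.getElem_mem i.2),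
      by rw [← List.ofFn_getElem_eq_map]; rfl⟩
  rw [commutator_def] at hx
  induction hx using closure_induction_left with
  | one => exact ⟨[], by simp⟩
  | mul_left _ hy _ _ ih =>
    obtain ⟨g, -, t, ht, rfl⟩ := hy
    obtain ⟨l, hl, rfl⟩ := ih
    refine ⟨(g⁻¹, t⁻¹) :: l, List.forall_mem_cons.2 ⟨inv_mem ht, hl⟩, ?_⟩
    simp [f, commutatorElement_def, mul_assoc]
  | inv_mul_cancel _ hy _ _ ih =>
    obtain ⟨g, -, t, ht, rfl⟩ := hy
    obtain ⟨l, hl, rfl⟩ := ih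
    refine ⟨(g, g * t⁻¹ * g⁻¹) :: l,
      List.forall_mem_cons.2 ⟨Normal.conj_mem ‹_› _ (inv_mem ht) g, hl⟩, ?_⟩
    simp [f, commutatorElement_def, mul_assoc]

section CommutatorHom

variable (N : Subgroup G) [N.Normal] [IsMulCommutative N]

def commutatorHom (g : G) : N →* N :=
  (MulAut.conjNormal g).toMonoidHom / MonoidHom.id N

@[simp]
theorem coe_commutatorHom_apply (g : G) (t : N) :
    (commutatorHom N g t : G) = ⁅g, (t : G)⁆ := by
  simp [commutatorHom, commutatorElement_def, div_eq_mul_inv]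

theorem commutatorHom_mul_of_mem {g τ : G} (hτ : τ ∈ N) :
    commutatorHom N (g * τ) = commutatorHom N g := by
  ext t
  rw [coe_commutatorHom_apply, coe_commutatorHom_apply, commutatorElement_mul_left_eq_conj_mul,
    commutatorElement_eq_one_iff_mul_comm.mpr (setLike_mul_comm hτ t.2), mul_one,
    mul_inv_cancel, one_mul]

theorem commutator_top_eq_map_iSup_range_commutatorHom :
    ⁅(⊤ : Subgroup G), N⁆ = (⨆ q : G ⧸ N, (commutatorHom N q.out).range).map N.subtype := by
  refine le_antisymm (commutator_le.2 fun g _ t ht ↦ ?_) ?_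
  · obtain ⟨τ, hτ⟩ := QuotientGroup.mk_out_eq_mul N g
    refine ⟨commutatorHom N (g : G ⧸ N).out ⟨t, ht⟩, mem_iSup_of_mem _ ⟨⟨t, ht⟩, rfl⟩, ?_⟩
    rw [hτ, commutatorHom_mul_of_mem N τ.2]
    simp
  · rw [map_le_iff_le_comap, iSup_le_iff]
    rintro q _ ⟨t, rfl⟩
    rw [mem_comap, coe_subtype, coe_commutatorHom_apply]
    exact commutator_mem_commutator (mem_top q.out) t.2

end CommutatorHom

section Topology

variable [TopologicalSpace G] [IsTopologicalGroup G]

theorem isCompact_iSup {A : Type*} [CommGroup A] [TopologicalSpace A] [ContinuousMul A]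
    {ι : Type*} [Finite ι] {H : ι → Subgroup A} (hH : ∀ i, IsCompact (H i : Set A)) :
    IsCompact ((⨆ i, H i : Subgroup A) : Set A) := by
  cases nonempty_fintype ι
  have (i : ι) : CompactSpace (H i) := isCompact_iff_compactSpace.mp (hH i)
  have hcomm : Pairwise fun i j ↦ ∀ x y : A, x ∈ H i → y ∈ H j → Commute x y :=
    fun _ _ _ x y _ _ ↦ Commute.all x y
  have hprod : ⇑(noncommPiCoprod hcomm) = fun u : (i : ι) → H i ↦ ∏ i, (u i : A) :=
    funext fun u ↦ by rw [noncommPiCoprod_apply, Finset.noncommProd_eq_prod]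
  rw [← noncommPiCoprod_range (hcomm := hcomm), MonoidHom.coe_range, hprod]
  exact isCompact_range (continuous_finsetProd _ fun i _ ↦
    continuous_subtype_val.comp (continuous_apply i))

theorem continuous_commutatorHom (N : Subgroup G) [N.Normal] [IsMulCommutative N] (g : G) :
    Continuous (commutatorHom N g) := by
  refine continuous_induced_rng.2 ?_
  simp only [Function.comp_def, coe_commutatorHom_apply, commutatorElement_def]
  fun_prop

theorem isCompact_commutator_top [CompactSpace G] (N : Subgroup G) [N.Normal]
    [IsMulCommutative N] (hN : IsClosed (N : Set G)) [N.FiniteIndex] :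
    IsCompact ((⁅(⊤ : Subgroup G), N⁆ : Subgroup G) : Set G) := by
  have : CompactSpace N := isCompact_iff_compactSpace.mp hN.isCompact
  rw [commutator_top_eq_map_iSup_range_commutatorHom, coe_map]
  refine (isCompact_iSup fun q ↦ ?_).image continuous_subtype_val
  rw [MonoidHom.coe_range]
  exact isCompact_range (continuous_commutatorHom N _)

instance connectedComponentOfOne_normal : (connectedComponentOfOne G).Normal where
  conj_mem t ht g := by
    show g * t * g⁻¹ ∈ connectedComponent (1 : G)
    simpa using (continuous_const_mul g |>.mul continuous_const (g := fun _ ↦ g⁻¹)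
      |>.image_connectedComponent_subset 1) ⟨t, ht, rfl⟩

theorem connectedComponentOfOne_commutator_le {K : Subgroup G} [K.Normal]
    [IsClosed (K : Set G)] [Finite (_root_.commutator (G ⧸ K))] :
    (connectedComponentOfOne (_root_.commutator G)).map (_root_.commutator G).subtype ≤ K := by
  have hC : IsPreconnected (((connectedComponentOfOne (_root_.commutator G)).map
      (_root_.commutator G).subtype : Subgroup G) : Set G) :=
    isPreconnected_connectedComponent.image _ continuous_subtype_val.continuousOn
  have hmap : (_root_.commutator G).map (QuotientGroup.mk' K) ≤ _root_.commutator (G ⧸ K) := by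
    rw [_root_.commutator_def, _root_.commutator_def, map_commutator]
    exact commutator_mono le_top le_top
  rintro _ ⟨x, hx, rfl⟩
  rw [← QuotientGroup.eq_one_iff]
  exact hC.constant_of_mapsTo (Set.toFinite _).isDiscrete
    QuotientGroup.continuous_mk.continuousOn (fun _ ⟨y, _, hy⟩ ↦ hmap ⟨_, hy ▸ y.2, rfl⟩)
    ⟨x, hx, rfl⟩ (one_mem _)

end Topology

end Subgroup

theorem stmt_6_general {E : Type*} [NormedAddCommGroup E] [NormedSpace ℝ E]
    {H : Type*} [TopologicalSpace H] (I : ModelWithCorners ℝ E H)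
    (G : Type*) [Group G] [TopologicalSpace G] [ChartedSpace H G]
    [IsTopologicalGroup G] [T2Space G] [CompactSpace G]
    (habel : ∀ a ∈ Subgroup.connectedComponentOfOne G,
      ∀ b ∈ Subgroup.connectedComponentOfOne G, a * b = b * a) :
    ∀ x ∈ (Subgroup.connectedComponentOfOne ↥(commutator G)).map (commutator G).subtype,
      ∃ (n : ℕ) (g t : Fin n → G),
        (∀ i, t i ∈ Subgroup.connectedComponentOfOne G) ∧
        x = (List.ofFn fun i => (g i)⁻¹ * (t i)⁻¹ * g i * t i).prod := by
  intro x hx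
  set T := Subgroup.connectedComponentOfOne G
  have := I.locallyConnectedSpace
  have := ChartedSpace.locallyConnectedSpace H G
  have : IsMulCommutative T := isMulCommutative_iff.2 fun a b ↦ Subtype.ext (habel _ a.2 _ b.2)
  have := T.quotient_finite_of_isOpen isOpen_connectedComponent
  have := Subgroup.finiteIndex_of_finite_quotient (H := T)
  have : IsClosed ((⁅⊤, T⁆ : Subgroup G) : Set G) :=
    (T.isCompact_commutator_top isClosed_connectedComponent).isClosed
  have := Subgroup.finite_commutator_quotient_of_commutator_top_le (le_refl ⁅⊤, T⁆)
  exact T.exists_prod_of_mem_commutator_top (Subgroup.connectedComponentOfOne_commutator_le hx)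

/-- Let `G` be a compact Lie group whose identity component `G₀ = T` is abelian
(hence a torus). Then every element of the identity component `[G,G]₀` of the commutator
subgroup `[G,G]` can be written as a finite product `[g₁,t₁]⋯[gₙ,tₙ]` with `gᵢ ∈ G`, `tᵢ ∈ T`,
where `[x,y] = x⁻¹y⁻¹xy`. -/
theorem stmt_6 {E : Type*} [NormedAddCommGroup E] [NormedSpace ℝ E] [FiniteDimensional ℝ E]
    {H : Type*} [TopologicalSpace H] (I : ModelWithCorners ℝ E H)
    (G : Type*) [Group G] [TopologicalSpace G] [ChartedSpace H G] [LieGroup I (⊤ : ℕ∞) G]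
    [IsTopologicalGroup G] [T2Space G] [CompactSpace G]
    (habel : ∀ a ∈ Subgroup.connectedComponentOfOne G,
      ∀ b ∈ Subgroup.connectedComponentOfOne G, a * b = b * a) :
    ∀ x ∈ (Subgroup.connectedComponentOfOne ↥(commutator G)).map (commutator G).subtype,
      ∃ (n : ℕ) (g t : Fin n → G),
        (∀ i, t i ∈ Subgroup.connectedComponentOfOne G) ∧
        x = (List.ofFn fun i => (g i)⁻¹ * (t i)⁻¹ * g i * t i).prod :=
  stmt_6_general I G habel
end
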